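/- Let X := {2^{2^k} : k ∈ ℕ, k ≥ 1} ⊆ ℝ, let ρ(x,y) := |x−y| for x,y ∈ X, and let μ := Σ_{k=1}^∞ 2^k·δ_{2^{2^k}}. Then for every x ∈ X and every λ ∈ (1,∞), liminf_{r→∞} μ(B(x,λr))/μ(B(x,r)) = 1; in particular, (X,ρ,μ) does not satisfy the weak reverse doubling (WRD) condition. -/

import Mathlib

/-! The atoms `a_j = 2^{2^j}` satisfy `a_{n+1} = a_n²`, so for large `n` the ball of radius `a_n`
around a fixed atom contains exactly the atoms `a_1, …, a_n`, and so does the ball of radius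
`λ a_n`: the next atom lies at distance at least `a_n² - a_n ≥ λ a_n`. Hence the ratio
`μ(B(x, λr)) / μ(B(x, r))` equals `1` along `r = a_n`, while it is always at least `1`. -/

noncomputable section

open MeasureTheory Filter Set Metric
open scoped ENNReal NNReal Topology

namespace Paper

/-- The measure `μ = Σ_{k ≥ 1} 2^k δ_{2^{2^k}}` on `ℝ` (indexed below by `k+1`, `k : ℕ`). -/
def μX : Measure ℝ :=
  Measure.sum fun k : ℕ => ((2 : ℝ≥0∞) ^ (k + 1)) • Measure.dirac ((2 : ℝ) ^ 2 ^ (k + 1))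

theorem liminf_measure_ball_ratio_eq_one {X : Type*} [PseudoMetricSpace X] [MeasurableSpace X]
    (ν : Measure X) (x : X) {lam : ℝ} (hlam : 1 ≤ lam)
    (hpos : ∀ r > 0, ν (ball x r) ≠ 0) (hfin : ∀ r, ν (ball x r) ≠ ∞)
    (hfreq : ∃ᶠ r in atTop, ν (ball x (lam * r)) = ν (ball x r)) :
    liminf (fun r => ν (ball x (lam * r)) / ν (ball x r)) atTop = 1 := by
  apply le_antisymm
  · refine liminf_le_of_frequently_le (hfreq.mono fun r hr => ?_) (by isBoundedDefault)
    rw [hr]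
    exact ENNReal.div_self_le_one
  · refine le_liminf_of_le (by isBoundedDefault) ?_
    filter_upwards [eventually_gt_atTop 0] with r hr
    calc (1 : ℝ≥0∞) = ν (ball x r) / ν (ball x r) := (ENNReal.div_self (hpos r hr) (hfin r)).symm
      _ ≤ ν (ball x (lam * r)) / ν (ball x r) :=
        ENNReal.div_le_div_right
          (measure_mono (ball_subset_ball (le_mul_of_one_le_left hr.le hlam))) _

def atom (j : ℕ) : ℝ := 2 ^ 2 ^ j

lemma atom_pos (j : ℕ) : 0 < atom j := by unfold atom; positivity

lemma atom_strictMono : StrictMono atom := fun _ _ h =>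
  pow_lt_pow_right₀ one_lt_two (Nat.pow_lt_pow_right one_lt_two h)

lemma atom_succ (n : ℕ) : atom (n + 1) = atom n ^ 2 := by
  rw [atom, atom, pow_succ, pow_mul]

lemma natCast_lt_atom (j : ℕ) : (j : ℝ) < atom j := by
  have : ((j : ℕ) : ℝ) < ((2 ^ 2 ^ j : ℕ) : ℝ) := by
    exact_mod_cast j.lt_two_pow_self.trans (Nat.pow_lt_pow_right one_lt_two j.lt_two_pow_self)
  simpa [atom] using this

lemma tendsto_atom_atTop : Tendsto atom atTop atTop :=
  tendsto_atTop_mono (fun j => (natCast_lt_atom j).le) tendsto_natCast_atTop_atTop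

lemma μX_apply (s : Set ℝ) :
    μX s = ∑' k, (2 : ℝ≥0∞) ^ (k + 1) * s.indicator 1 (atom (k + 1)) := by
  simp only [μX, Measure.sum_apply_of_countable, Measure.smul_apply, Measure.dirac_apply,
    smul_eq_mul, atom]

lemma μX_congr {s t : Set ℝ} (h : ∀ k, atom (k + 1) ∈ s ↔ atom (k + 1) ∈ t) : μX s = μX t := by
  simp only [μX_apply]
  congr 1 with k
  by_cases hs : atom (k + 1) ∈ s
  · rw [indicator_of_mem hs, indicator_of_mem ((h k).1 hs)]
  · rw [indicator_of_notMem hs, indicator_of_notMem (mt (h k).2 hs)]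

lemma μX_ne_zero_of_atom_mem {s : Set ℝ} {k : ℕ} (hk : atom (k + 1) ∈ s) : μX s ≠ 0 := by
  rw [μX_apply]
  refine ne_of_gt (lt_of_lt_of_le ?_ (ENNReal.le_tsum k))
  rw [indicator_of_mem hk, Pi.one_apply, mul_one]
  positivity

lemma μX_ne_top_of_subset_Iic {s : Set ℝ} {b : ℝ} (hs : s ⊆ Iic b) : μX s ≠ ∞ := by
  rw [μX_apply, tsum_eq_sum (s := Finset.range ⌈b⌉₊)]
  · exact ENNReal.sum_ne_top.2 fun k _ => by
      by_cases hk : atom (k + 1) ∈ s <;> simp [hk]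
  · intro k hk
    rw [indicator_of_notMem (fun hmem => ?_), mul_zero]
    have hkb : (⌈b⌉₊ : ℝ) ≤ k := by exact_mod_cast not_lt.1 (Finset.mem_range.not.1 hk)
    have hab : atom (k + 1) ≤ b := hs hmem
    have := natCast_lt_atom (k + 1)
    push_cast at this
    linarith [Nat.le_ceil b]

lemma dist_atom_lt_mul_iff {m n : ℕ} {lam : ℝ} (hmn : m ≤ n) (hlam : 1 ≤ lam)
    (hn : lam + 1 ≤ atom n) (j : ℕ) : dist (atom j) (atom m) < lam * atom n ↔ j ≤ n := by
  have hm := atom_strictMono.monotone hmn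
  have hn0 := atom_pos n
  constructor
  · intro hlt
    by_contra! hjn
    -- the first atom beyond `a_n` is `a_n²`, already too far away
    have hj : atom n ^ 2 ≤ atom j := atom_succ n ▸ atom_strictMono.monotone hjn
    rw [Real.dist_eq, abs_lt] at hlt
    nlinarith
  · intro hjn
    have hj := atom_strictMono.monotone hjn
    rw [Real.dist_eq, abs_lt]
    constructor <;> nlinarith [atom_pos j, atom_pos m]

lemma μX_ball_mul_atom_eq {m n : ℕ} {lam : ℝ} (hmn : m ≤ n) (hlam : 1 ≤ lam)
    (hn : lam + 1 ≤ atom n) :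
    μX (ball (atom m) (lam * atom n)) = μX (ball (atom m) (atom n)) := by
  have hn1 : (1 : ℝ) + 1 ≤ atom n := by linarith
  refine μX_congr fun k => ?_
  rw [mem_ball, mem_ball, dist_atom_lt_mul_iff hmn hlam hn, ← one_mul (atom n),
    dist_atom_lt_mul_iff hmn le_rfl hn1]

theorem liminf_μX_ball_ratio_eq_one (k : ℕ) {lam : ℝ} (hlam : 1 ≤ lam) :
    liminf (fun r => μX (ball (atom (k + 1)) (lam * r)) / μX (ball (atom (k + 1)) r)) atTop =
      1 := by
  refine liminf_measure_ball_ratio_eq_one μX _ hlam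
    (fun r hr => μX_ne_zero_of_atom_mem (mem_ball_self hr))
    (fun r => μX_ne_top_of_subset_Iic
      ((Real.ball_eq_Ioo _ _).trans_subset (Ioo_subset_Iio_self.trans Iio_subset_Iic_self))) ?_
  have hlarge : ∀ᶠ n in atTop, k + 1 ≤ n ∧ lam + 1 ≤ atom n :=
    (eventually_ge_atTop _).and (tendsto_atom_atTop.eventually_ge_atTop _)
  exact tendsto_atom_atTop.frequently
    (hlarge.mono fun n hn => μX_ball_mul_atom_eq hn.1 hlam hn.2).frequently

theorem statement9 :
    (∀ (k : ℕ) (lam : ℝ), 1 < lam →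
      liminf (fun r : ℝ =>
          μX (Metric.ball ((2 : ℝ) ^ 2 ^ (k + 1)) (lam * r)) /
            μX (Metric.ball ((2 : ℝ) ^ 2 ^ (k + 1)) r)) atTop = 1) ∧
    ¬ ∃ (k : ℕ) (lam C : ℝ), 1 < lam ∧ 1 < C ∧
        ENNReal.ofReal C ≤
          liminf (fun r : ℝ =>
            μX (Metric.ball ((2 : ℝ) ^ 2 ^ (k + 1)) (lam * r)) /
              μX (Metric.ball ((2 : ℝ) ^ 2 ^ (k + 1)) r)) atTop := by
  refine ⟨fun k lam hlam => liminf_μX_ball_ratio_eq_one k hlam.le, ?_⟩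
  rintro ⟨k, lam, C, hlam, hC, hle⟩
  have hC1 := ENNReal.ofReal_le_one.1 (hle.trans_eq (liminf_μX_ball_ratio_eq_one k hlam.le))
  linarith

end Paper
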